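/- arXiv:2501.01935 — 4 statements merged into one kernel-verified Lean document; each statement's English description precedes it below -/
import Mathlib

section
/- For any z ∈ ℝ^n and positive integer k ≤ n, if ‖z‖_∞ ≤ ρ and z is such that ‖z‖₁ ≤ 2kρ, then for any g ∈ ℝ^m and matrix N ∈ ℝ^{m×n}, |g^T N z| ≤ ρ · ‖N^T g‖_{2k,1}, where ‖·‖_{2k,1} is the sum of the 2k largest magnitudes of entries. -/
/-! Write `w = Nᵀg`, so that `|gᵀNz| ≤ ∑ |wᵢ| |zᵢ|`. Let `S` be a set of `min(2k, n)` largest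
entries of `|w|` and `c ≥ 0` a threshold separating them from the rest. Termwise,
`|wᵢ| |zᵢ| ≤ ρ |wᵢ| [i ∈ S] + c (|zᵢ| - ρ [i ∈ S])`, and after summing the `c`-term is
`c (‖z‖₁ - |S| ρ) ≤ 0`: for `|S| = 2k` by the `ℓ₁` bound, for `S = univ` by the `ℓ∞` bound. -/

open Matrix

/-- `‖w‖_{2k,1}`: the sum of the `min(2k,n)` largest magnitudes of entries of `w`. -/
noncomputable def knorm {n : ℕ} (k : ℕ) (z : Fin n → ℝ) : ℝ :=
  sSup {v : ℝ | ∃ S : Finset (Fin n), S.card = min k n ∧ v = ∑ i ∈ S, |z i|}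

open Finset

lemma sum_abs_le_knorm {n k : ℕ} (z : Fin n → ℝ) {S : Finset (Fin n)}
    (hS : S.card = min k n) : ∑ i ∈ S, |z i| ≤ knorm k z := by
  refine le_csSup ⟨∑ i, |z i|, ?_⟩ ⟨S, hS, rfl⟩
  rintro v ⟨T, -, rfl⟩
  exact sum_le_sum_of_subset_of_nonneg (subset_univ T) fun i _ _ => abs_nonneg _

section Threshold

variable {ι : Type*} [Fintype ι]

/-- A subset of size `r` maximising `∑ i ∈ S, a i` cannot be improved by swapping one element,
so it dominates its complement pointwise. -/
lemma exists_card_eq_forall_notMem_le (a : ι → ℝ) {r : ℕ} (hr : r ≤ Fintype.card ι) :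
    ∃ S : Finset ι, S.card = r ∧ ∀ i ∉ S, ∀ j ∈ S, a i ≤ a j := by
  classical
  obtain ⟨S, hSr, hmax⟩ := exists_max_image (univ.powersetCard r) (fun T => ∑ i ∈ T, a i)
    (powersetCard_nonempty.mpr (by simpa using hr))
  have hS : S.card = r := (mem_powersetCard.mp hSr).2
  refine ⟨S, hS, fun i hi j hj => ?_⟩
  have hi' : i ∉ S.erase j := fun h => hi (mem_of_mem_erase h)
  have hswap := hmax (insert i (S.erase j)) (mem_powersetCard.mpr ⟨subset_univ _, by
    rw [card_insert_of_notMem hi', card_erase_add_one hj, hS]⟩)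
  rw [sum_insert hi'] at hswap
  linarith [sum_erase_add S a hj]

lemma exists_nonneg_threshold {a : ι → ℝ} (ha : ∀ i, 0 ≤ a i) {S : Finset ι}
    (hS : ∀ i ∉ S, ∀ j ∈ S, a i ≤ a j) :
    ∃ c, 0 ≤ c ∧ (∀ i ∈ S, c ≤ a i) ∧ ∀ i ∉ S, a i ≤ c := by
  classical
  have hbdd : BddAbove (a '' ↑Sᶜ) := (Set.toFinite _).bddAbove
  refine ⟨sSup (a '' ↑Sᶜ), Real.sSup_nonneg ?_, fun j hj => Real.sSup_le ?_ (ha j),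
    fun i hi => le_csSup hbdd ⟨i, by simpa using hi, rfl⟩⟩
  · rintro _ ⟨i, -, rfl⟩
    exact ha i
  · rintro _ ⟨i, hi, rfl⟩
    exact hS i (by simpa using hi) j hj

lemma sum_mul_le_mul_sum_of_threshold {a x : ι → ℝ} {S : Finset ι} {c ρ : ℝ} (hc : 0 ≤ c)
    (hS : ∀ i ∈ S, c ≤ a i) (hSc : ∀ i ∉ S, a i ≤ c)
    (hx₀ : ∀ i, 0 ≤ x i) (hxρ : ∀ i, x i ≤ ρ) (hx : ∑ i, x i ≤ S.card * ρ) :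
    ∑ i, a i * x i ≤ ρ * ∑ i ∈ S, a i := by
  classical
  -- on `S` this is `0 ≤ (a i - c) * (ρ - x i)`, off `S` it is `0 ≤ (c - a i) * x i`
  have hterm : ∀ i, a i * x i ≤
      (if i ∈ S then ρ * a i else 0) + c * (x i - if i ∈ S then ρ else 0) := by
    intro i
    split_ifs with hi
    · nlinarith [hS i hi, hxρ i]
    · nlinarith [hSc i hi, hx₀ i]
  calc ∑ i, a i * x i
      ≤ ∑ i, ((if i ∈ S then ρ * a i else 0) + c * (x i - if i ∈ S then ρ else 0)) :=
        sum_le_sum fun i _ => hterm i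
    _ = ρ * ∑ i ∈ S, a i + c * (∑ i, x i - S.card * ρ) := by
        rw [sum_add_distrib, ← mul_sum, sum_sub_distrib]
        simp only [sum_ite_mem, univ_inter, sum_const, nsmul_eq_mul, mul_sum]
    _ ≤ ρ * ∑ i ∈ S, a i := by
        linarith [mul_nonpos_of_nonneg_of_nonpos hc (sub_nonpos.mpr hx)]

end Threshold

lemma sum_abs_mul_le_mul_knorm {n s : ℕ} (w x : Fin n → ℝ) {ρ : ℝ} (hρ : 0 ≤ ρ)
    (hx₀ : ∀ i, 0 ≤ x i) (hxρ : ∀ i, x i ≤ ρ) (hx : ∑ i, x i ≤ s * ρ) :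
    ∑ i, |w i| * x i ≤ ρ * knorm s w := by
  obtain ⟨S, hS, hsep⟩ :=
    exists_card_eq_forall_notMem_le (fun i => |w i|) (r := min s n) (by simp)
  obtain ⟨c, hc, hcS, hcSc⟩ := exists_nonneg_threshold (fun i => abs_nonneg (w i)) hsep
  have hxS : ∑ i, x i ≤ S.card * ρ := by
    rw [hS, Nat.cast_min, min_mul_of_nonneg _ _ hρ]
    refine le_min hx ?_
    simpa using sum_le_sum fun i (_ : i ∈ univ) => hxρ i
  calc ∑ i, |w i| * x i ≤ ρ * ∑ i ∈ S, |w i| :=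
        sum_mul_le_mul_sum_of_threshold hc hcS hcSc hx₀ hxρ hxS
    _ ≤ ρ * knorm s w := mul_le_mul_of_nonneg_left (sum_abs_le_knorm w hS) hρ

theorem dotProduct_le_knorm_general {m n : ℕ} (k : ℕ)
    (N : Matrix (Fin m) (Fin n) ℝ) (z : Fin n → ℝ) (ρ : ℝ) (hρ : 0 ≤ ρ)
    (hinf : ∀ i, |z i| ≤ ρ) (h1 : (∑ i, |z i|) ≤ 2 * k * ρ) (g : Fin m → ℝ) :
    |g ⬝ᵥ N.mulVec z| ≤ ρ * knorm (2 * k) (Nᵀ.mulVec g) := by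
  set w := Nᵀ *ᵥ g
  have hdot : g ⬝ᵥ N *ᵥ z = w ⬝ᵥ z := by rw [dotProduct_mulVec, ← mulVec_transpose]
  calc |g ⬝ᵥ N *ᵥ z| = |∑ i, w i * z i| := by rw [hdot, dotProduct]
    _ ≤ ∑ i, |w i| * |z i| := by
        simpa only [abs_mul] using abs_sum_le_sum_abs (fun i => w i * z i) univ
    _ ≤ ρ * knorm (2 * k) w :=
        sum_abs_mul_le_mul_knorm w _ hρ (fun i => abs_nonneg _) hinf (by exact_mod_cast h1)

/-- If `‖z‖_∞ ≤ ρ` and `‖z‖₁ ≤ 2kρ` then `|gᵀNz| ≤ ρ‖Nᵀg‖_{2k,1}`. -/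
theorem dotProduct_le_knorm {m n : ℕ} (k : ℕ) (hk : 0 < k) (hkn : k ≤ n)
    (N : Matrix (Fin m) (Fin n) ℝ) (z : Fin n → ℝ) (ρ : ℝ) (hρ : 0 ≤ ρ)
    (hinf : ∀ i, |z i| ≤ ρ) (h1 : (∑ i, |z i|) ≤ 2 * k * ρ) (g : Fin m → ℝ) :
    |g ⬝ᵥ N.mulVec z| ≤ ρ * knorm (2 * k) (Nᵀ.mulVec g) :=
  dotProduct_le_knorm_general k N z ρ hρ hinf h1 g
end

section
/- Let z ∈ ℝ^n satisfy ‖z‖_∞ ≤ ρ_∞, ‖z‖₂ ≤ ρ₂, ‖z‖₁ ≤ ρ₁. Then for any d ∈ ℝ^n, |d^T z| ≤ min over decompositions d = u + v + w of (ρ_∞‖u‖₁ + ρ₂‖v‖₂ + ρ₁‖w‖_∞). Conversely, max{d^T z : ‖z‖_∞ ≤ ρ_∞, ‖z‖₂ ≤ ρ₂, ‖z‖₁ ≤ ρ₁} equals inf{ρ_∞‖u‖₁ + ρ₂‖v‖₂ + ρ₁‖w‖_∞ : u+v+w = d}. -/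
/-! Hölder's inequality on each summand of `d = u + v + w` bounds `d ⬝ᵥ z`, for `z` in the
intersection of the balls, by the infimal convolution `N` of the scaled dual norms. Conversely,
`N` is a seminorm, so Hahn–Banach gives `q` with `q ⬝ᵥ d = N d` and `q ⬝ᵥ y ≤ N y` for all `y`.
As `N` is dominated by each of the three scaled dual norms, `q` lies in each ball, so the
supremum is attained at `q` and equals `N d`. -/

open Matrix Finset
open scoped ENNReal NNReal

namespace Seminorm

variable {E : Type*} [AddCommGroup E]

section NormedField
variable {𝕜 : Type*} [NormedField 𝕜] [Module 𝕜 E]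

theorem inf_apply_add_le (p q : Seminorm 𝕜 E) (x y : E) : (p ⊓ q) (x + y) ≤ p x + q y :=
  ciInf_le_of_le bddBelow_range_add x (by simp)

theorem inf_inf_apply_eq_sInf (p q r : Seminorm 𝕜 E) (x : E) :
    (p ⊓ q ⊓ r) x = sInf {t | ∃ u v w, u + v + w = x ∧ t = p u + q v + r w} := by
  apply le_antisymm
  · refine le_csInf ⟨_, x, 0, 0, by simp, rfl⟩ ?_
    rintro _ ⟨u, v, w, rfl, rfl⟩
    calc (p ⊓ q ⊓ r) (u + v + w) ≤ (p ⊓ q) (u + v) + r w := inf_apply_add_le _ _ _ _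
      _ ≤ p u + q v + r w := by grw [inf_apply_add_le]
  · have hbdd : BddBelow {t | ∃ u v w, u + v + w = x ∧ t = p u + q v + r w} := by
      refine ⟨0, ?_⟩
      rintro _ ⟨u, v, w, -, rfl⟩
      exact add_nonneg (add_nonneg (apply_nonneg _ _) (apply_nonneg _ _)) (apply_nonneg _ _)
    refine le_ciInf fun a => sub_le_iff_le_add.mp <| le_ciInf fun u => ?_
    exact sub_le_iff_le_add.mpr <| csInf_le hbdd ⟨u, a - u, x - a, by abel, rfl⟩

end NormedField

theorem exists_dual_le_eq [Module ℝ E] (p : Seminorm ℝ E) (x : E) :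
    ∃ g : Module.Dual ℝ E, (∀ y, g y ≤ p y) ∧ g x = p x := by
  let f : E →ₗ.[ℝ] ℝ := LinearPMap.mkSpanSingleton' x (p x) fun c hc => by
    have hcx : |c| * p x = 0 := by rw [← Real.norm_eq_abs, ← map_smul_eq_mul, hc, map_zero]
    rcases mul_eq_zero.1 hcx with h | h <;> simp_all
  have hfp : ∀ y : f.domain, f y ≤ p y := by
    rintro ⟨y, hy⟩
    obtain ⟨c, rfl⟩ := Submodule.mem_span_singleton.1 hy
    simp only [f, LinearPMap.mkSpanSingleton'_apply, map_smul_eq_mul, Real.norm_eq_abs,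
      smul_eq_mul, RingHom.id_apply]
    exact mul_le_mul_of_nonneg_right (le_abs_self c) (apply_nonneg p x)
  obtain ⟨g, hgf, hgp⟩ := exists_extension_of_le_sublinear f p
    (fun c hc y => by rw [map_smul_eq_mul, Real.norm_of_nonneg hc.le]) (map_add_le_add p) hfp
  exact ⟨g, hgp, (hgf ⟨x, Submodule.mem_span_singleton_self x⟩).trans
    (LinearPMap.mkSpanSingleton'_apply_self _ _ _ _)⟩

theorem exists_dotProduct_le_eq {ι : Type*} [Fintype ι] [DecidableEq ι]
    (p : Seminorm ℝ (ι → ℝ)) (x : ι → ℝ) :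
    ∃ q : ι → ℝ, (∀ y, q ⬝ᵥ y ≤ p y) ∧ q ⬝ᵥ x = p x := by
  obtain ⟨g, hgp, hgx⟩ := p.exists_dual_le_eq x
  obtain ⟨q, rfl⟩ := (dotProductEquiv ℝ ι).surjective g
  exact ⟨q, hgp, hgx⟩

end Seminorm

variable {ι : Type*} [Fintype ι]

noncomputable def lpSeminorm (p : ℝ≥0∞) [Fact (1 ≤ p)] : Seminorm ℝ (ι → ℝ) :=
  (normSeminorm ℝ (PiLp p fun _ : ι => ℝ)).comp (WithLp.linearEquiv p ℝ (ι → ℝ)).symm.toLinearMap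

theorem lpSeminorm_one_apply (u : ι → ℝ) : lpSeminorm 1 u = ∑ i, |u i| := by
  simp [lpSeminorm, PiLp.norm_eq_of_L1]

theorem lpSeminorm_two_apply (v : ι → ℝ) : lpSeminorm 2 v = √(∑ i, v i ^ 2) := by
  simp [lpSeminorm, EuclideanSpace.norm_eq]

theorem lpSeminorm_top_apply (w : ι → ℝ) : lpSeminorm ∞ w = ⨆ i, |w i| := by
  simp [lpSeminorm, PiLp.norm_eq_ciSup]

theorem abs_dotProduct_le_mul_sum_abs {z : ι → ℝ} {c : ℝ} (hz : ∀ i, |z i| ≤ c) (u : ι → ℝ) :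
    |u ⬝ᵥ z| ≤ c * ∑ i, |u i| := by
  calc |u ⬝ᵥ z| ≤ ∑ i, |u i| * |z i| :=
        (abs_sum_le_sum_abs _ _).trans_eq (sum_congr rfl fun i _ => abs_mul (u i) (z i))
    _ ≤ ∑ i, |u i| * c := sum_le_sum fun i _ => mul_le_mul_of_nonneg_left (hz i) (abs_nonneg _)
    _ = c * ∑ i, |u i| := by rw [← sum_mul, mul_comm]

theorem abs_dotProduct_le_sqrt_mul_sqrt (v z : ι → ℝ) :
    |v ⬝ᵥ z| ≤ √(∑ i, v i ^ 2) * √(∑ i, z i ^ 2) := by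
  refine abs_le.2 ⟨neg_le.2 ?_, Real.sum_mul_le_sqrt_mul_sqrt _ v z⟩
  simpa [dotProduct] using Real.sum_mul_le_sqrt_mul_sqrt univ (-v) z

theorem abs_le_of_forall_dotProduct_le [DecidableEq ι] {q : ι → ℝ} {c : ℝ}
    (h : ∀ y, q ⬝ᵥ y ≤ c * ∑ i, |y i|) (i : ι) : |q i| ≤ c :=
  abs_le.2 ⟨neg_le.1 <| by simpa [Pi.single_apply, apply_ite] using h (Pi.single i (-1)),
    by simpa [Pi.single_apply, apply_ite] using h (Pi.single i 1)⟩

theorem sqrt_sum_sq_le_of_forall_dotProduct_le {q : ι → ℝ} {c : ℝ} (hc : 0 ≤ c)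
    (h : ∀ y, q ⬝ᵥ y ≤ c * √(∑ i, y i ^ 2)) : √(∑ i, q i ^ 2) ≤ c := by
  have hqq : q ⬝ᵥ q = √(∑ i, q i ^ 2) ^ 2 := by
    rw [Real.sq_sqrt (by positivity), dotProduct]; simp [sq]
  have hq := h q
  nlinarith [Real.sqrt_nonneg (∑ i, q i ^ 2)]

theorem sum_abs_le_of_forall_dotProduct_le {q : ι → ℝ} {c : ℝ} (hc : 0 ≤ c)
    (h : ∀ y, q ⬝ᵥ y ≤ c * ⨆ i, |y i|) : ∑ i, |q i| ≤ c := by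
  have hsign : q ⬝ᵥ (fun i => (SignType.sign (q i) : ℝ)) = ∑ i, |q i| := by
    simp [dotProduct]
  have hsup : ⨆ i, |(SignType.sign (q i) : ℝ)| ≤ 1 :=
    Real.iSup_le (fun i => by cases SignType.sign (q i) <;> simp) zero_le_one
  calc ∑ i, |q i| = q ⬝ᵥ (fun i => (SignType.sign (q i) : ℝ)) := hsign.symm
    _ ≤ c * ⨆ i, |(SignType.sign (q i) : ℝ)| := h _
    _ ≤ c := mul_le_of_le_one_right hc hsup

theorem abs_dotProduct_le_of_mem_balls {ρinf ρ2 ρ1 : ℝ} {z : ι → ℝ} (hzinf : ∀ i, |z i| ≤ ρinf)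
    (hz2 : √(∑ i, z i ^ 2) ≤ ρ2) (hz1 : ∑ i, |z i| ≤ ρ1) (u v w : ι → ℝ) :
    |(u + v + w) ⬝ᵥ z| ≤ ρinf * ∑ i, |u i| + ρ2 * √(∑ i, v i ^ 2) + ρ1 * ⨆ i, |w i| := by
  have hu := abs_dotProduct_le_mul_sum_abs hzinf u
  have hv : |v ⬝ᵥ z| ≤ ρ2 * √(∑ i, v i ^ 2) :=
    (abs_dotProduct_le_sqrt_mul_sqrt v z).trans (by rw [mul_comm]; gcongr)
  have hw : |w ⬝ᵥ z| ≤ ρ1 * ⨆ i, |w i| := by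
    rw [dotProduct_comm, mul_comm]
    refine (abs_dotProduct_le_mul_sum_abs (c := ⨆ i, |w i|) (fun i => ?_) z).trans ?_
    · exact le_ciSup (Set.finite_range fun i => |w i|).bddAbove i
    · gcongr; exact Real.iSup_nonneg fun i => abs_nonneg _
  calc |(u + v + w) ⬝ᵥ z| ≤ |u ⬝ᵥ z| + |v ⬝ᵥ z| + |w ⬝ᵥ z| := by
        rw [add_dotProduct, add_dotProduct]; exact abs_add_three _ _ _
    _ ≤ _ := by gcongr

/-- The lattice infimum of seminorms is their infimal convolution, see `Seminorm.inf_apply`. -/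
noncomputable def infConvSeminorm (ρinf ρ2 ρ1 : ℝ) : Seminorm ℝ (ι → ℝ) :=
  ρinf.toNNReal • lpSeminorm 1 ⊓ ρ2.toNNReal • lpSeminorm 2 ⊓ ρ1.toNNReal • lpSeminorm ∞

theorem infConvSeminorm_apply {ρinf ρ2 ρ1 : ℝ} (hρinf : 0 ≤ ρinf) (hρ2 : 0 ≤ ρ2) (hρ1 : 0 ≤ ρ1)
    (d : ι → ℝ) :
    infConvSeminorm ρinf ρ2 ρ1 d = sInf {x | ∃ u v w : ι → ℝ, u + v + w = d ∧
      x = ρinf * ∑ i, |u i| + ρ2 * √(∑ i, v i ^ 2) + ρ1 * ⨆ i, |w i|} := by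
  simp only [infConvSeminorm, Seminorm.inf_inf_apply_eq_sInf, _root_.smul_apply, NNReal.smul_def,
    Real.coe_toNNReal _ hρinf, Real.coe_toNNReal _ hρ2, Real.coe_toNNReal _ hρ1, smul_eq_mul,
    lpSeminorm_one_apply, lpSeminorm_two_apply, lpSeminorm_top_apply]

theorem dotProduct_le_infConvSeminorm {ρinf ρ2 ρ1 : ℝ} (hρinf : 0 ≤ ρinf) (hρ2 : 0 ≤ ρ2)
    (hρ1 : 0 ≤ ρ1) {z : ι → ℝ} (hzinf : ∀ i, |z i| ≤ ρinf) (hz2 : √(∑ i, z i ^ 2) ≤ ρ2)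
    (hz1 : ∑ i, |z i| ≤ ρ1) (d : ι → ℝ) : d ⬝ᵥ z ≤ infConvSeminorm ρinf ρ2 ρ1 d := by
  rw [infConvSeminorm_apply hρinf hρ2 hρ1]
  refine le_csInf ⟨_, d, 0, 0, by simp, rfl⟩ ?_
  rintro _ ⟨u, v, w, rfl, rfl⟩
  exact (le_abs_self _).trans (abs_dotProduct_le_of_mem_balls hzinf hz2 hz1 u v w)

theorem mem_balls_of_forall_dotProduct_le_infConvSeminorm [DecidableEq ι] {ρinf ρ2 ρ1 : ℝ}
    (hρinf : 0 ≤ ρinf) (hρ2 : 0 ≤ ρ2) (hρ1 : 0 ≤ ρ1) {q : ι → ℝ}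
    (hq : ∀ y, q ⬝ᵥ y ≤ infConvSeminorm ρinf ρ2 ρ1 y) :
    (∀ i, |q i| ≤ ρinf) ∧ √(∑ i, q i ^ 2) ≤ ρ2 ∧ ∑ i, |q i| ≤ ρ1 := by
  have hq_le {p : Seminorm ℝ (ι → ℝ)} {ρ : ℝ} (hρ : 0 ≤ ρ)
      (hN : infConvSeminorm ρinf ρ2 ρ1 ≤ ρ.toNNReal • p) (y : ι → ℝ) : q ⬝ᵥ y ≤ ρ * p y := by
    simpa only [_root_.smul_apply, NNReal.smul_def, Real.coe_toNNReal _ hρ, smul_eq_mul] using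
      (hq y).trans (hN y)
  refine ⟨abs_le_of_forall_dotProduct_le fun y => ?_,
    sqrt_sum_sq_le_of_forall_dotProduct_le hρ2 fun y => ?_,
    sum_abs_le_of_forall_dotProduct_le hρ1 fun y => ?_⟩
  · rw [← lpSeminorm_one_apply]; exact hq_le hρinf (inf_le_left.trans inf_le_left) y
  · rw [← lpSeminorm_two_apply]; exact hq_le hρ2 (inf_le_left.trans inf_le_right) y
  · rw [← lpSeminorm_top_apply]; exact hq_le hρ1 inf_le_right y

/-- Duality for the intersection of `ℓ_∞`, `ℓ₂`, `ℓ₁` balls: if `‖z‖_∞ ≤ ρ_∞`,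
`‖z‖₂ ≤ ρ₂`, `‖z‖₁ ≤ ρ₁`, then for every decomposition `d = u + v + w`,
`|dᵀz| ≤ ρ_∞‖u‖₁ + ρ₂‖v‖₂ + ρ₁‖w‖_∞`; moreover the max of `dᵀz` over the
intersection equals the infimal convolution of the dual norms. -/
theorem dual_of_intersection_of_balls {n : ℕ} (ρinf ρ2 ρ1 : ℝ)
    (hρinf : 0 < ρinf) (hρ2 : 0 < ρ2) (hρ1 : 0 < ρ1) :
    (∀ z : Fin n → ℝ, (∀ i, |z i| ≤ ρinf) → Real.sqrt (∑ i, (z i) ^ 2) ≤ ρ2 →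
      (∑ i, |z i|) ≤ ρ1 → ∀ d u v w : Fin n → ℝ, d = u + v + w →
        |d ⬝ᵥ z| ≤ ρinf * (∑ i, |u i|) + ρ2 * Real.sqrt (∑ i, (v i) ^ 2) +
          ρ1 * (⨆ i, |w i|)) ∧
    (∀ d : Fin n → ℝ,
      sSup {x : ℝ | ∃ z : Fin n → ℝ, (∀ i, |z i| ≤ ρinf) ∧
          Real.sqrt (∑ i, (z i) ^ 2) ≤ ρ2 ∧ (∑ i, |z i|) ≤ ρ1 ∧ x = d ⬝ᵥ z} =
        sInf {x : ℝ | ∃ u v w : Fin n → ℝ, u + v + w = d ∧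
          x = ρinf * (∑ i, |u i|) + ρ2 * Real.sqrt (∑ i, (v i) ^ 2) +
            ρ1 * (⨆ i, |w i|)}) := by
  refine ⟨fun z hzinf hz2 hz1 d u v w hd =>
    hd ▸ abs_dotProduct_le_of_mem_balls hzinf hz2 hz1 u v w, fun d => ?_⟩
  rw [← infConvSeminorm_apply hρinf.le hρ2.le hρ1.le]
  obtain ⟨q, hq, hqd⟩ := (infConvSeminorm ρinf ρ2 ρ1).exists_dotProduct_le_eq d
  obtain ⟨hqinf, hq2, hq1⟩ :=
    mem_balls_of_forall_dotProduct_le_infConvSeminorm hρinf.le hρ2.le hρ1.le hq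
  refine IsGreatest.csSup_eq ⟨⟨q, hqinf, hq2, hq1, by rw [dotProduct_comm, hqd]⟩, ?_⟩
  rintro _ ⟨z, hzinf, hz2, hz1, rfl⟩
  exact dotProduct_le_infConvSeminorm hρinf.le hρ2.le hρ1.le hzinf hz2 hz1 d
end

section
/- Let H satisfy Condition Q_∞(s,κ) with κ < 1/2 for the matrix N. For any ν, ν̂ ∈ ℝ^n with ‖ν̂‖₁ ≤ ‖ν‖₁, letting z = ν̂ − ν and ρ = ‖H^T N z‖_∞, one has ‖z‖₁ ≤ (2sρ + 2‖ν − ν^s‖₁)/(1 − 2κ), where ν^s is ν with all but its s largest-magnitude entries zeroed out. -/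
/-!
Let `S` be a set of `s` largest entries of `ν` (in magnitude), so that `‖ν‖₁ - knorm s ν` is the
ℓ₁-mass of `ν` off `S`. Since `‖ν + z‖₁ ≤ ‖ν‖₁`, the triangle inequality on `S` and on `Sᶜ` puts
`z` in the cone `‖z‖₁ ≤ 2 ∑_S |zᵢ| + 2 ∑_{Sᶜ} |νᵢ|`. Finally `∑_S |zᵢ| ≤ s ‖z‖_∞`, and condition
`Q_∞(s,κ)` bounds `s ‖z‖_∞` by `s ρ + κ ‖z‖₁`; as `2κ < 1`, the term `2κ ‖z‖₁` is absorbed.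
-/

open Matrix

theorem exists_card_eq_min_knorm_eq {n : ℕ} (k : ℕ) (z : Fin n → ℝ) :
    ∃ S : Finset (Fin n), S.card = min k n ∧ knorm k z = ∑ i ∈ S, |z i| := by
  set sums := {v : ℝ | ∃ S : Finset (Fin n), S.card = min k n ∧ v = ∑ i ∈ S, |z i|}
  have hfinite : sums.Finite :=
    (Set.finite_range fun S : Finset (Fin n) => ∑ i ∈ S, |z i|).subset
      fun v ⟨S, _, hv⟩ => ⟨S, hv.symm⟩
  have hnonempty : sums.Nonempty := by
    obtain ⟨S, hS⟩ := Finset.exists_subset_card_eq (s := (Finset.univ : Finset (Fin n)))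
      (n := min k n) (by simp)
    exact ⟨_, S, hS.2, rfl⟩
  exact hnonempty.csSup_mem hfinite

theorem sum_abs_le_card_mul_iSup {ι : Type*} [Fintype ι] (S : Finset ι) (z : ι → ℝ) :
    ∑ i ∈ S, |z i| ≤ S.card * ⨆ i, |z i| := by
  have hbdd : BddAbove (Set.range fun i => |z i|) := (Set.finite_range _).bddAbove
  calc ∑ i ∈ S, |z i| ≤ ∑ _i ∈ S, ⨆ j, |z j| := Finset.sum_le_sum fun i _ => le_ciSup hbdd i
    _ = S.card * ⨆ i, |z i| := by rw [Finset.sum_const, nsmul_eq_mul]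

theorem sum_abs_sub_le_of_sum_abs_le {ι : Type*} [Fintype ι] [DecidableEq ι] (S : Finset ι)
    {x y : ι → ℝ} (hyx : ∑ i, |y i| ≤ ∑ i, |x i|) :
    ∑ i, |y i - x i| ≤ 2 * ∑ i ∈ S, |y i - x i| + 2 * ∑ i ∈ Sᶜ, |x i| := by
  have hS : ∑ i ∈ S, (|x i| - |y i - x i|) ≤ ∑ i ∈ S, |y i| :=
    Finset.sum_le_sum fun i _ => by
      linarith [abs_sub_abs_le_abs_sub (x i) (y i), abs_sub_comm (x i) (y i)]
  have hSc : ∑ i ∈ Sᶜ, (|y i - x i| - |x i|) ≤ ∑ i ∈ Sᶜ, |y i| :=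
    Finset.sum_le_sum fun i _ => by linarith [abs_sub (y i) (x i)]
  rw [Finset.sum_sub_distrib] at hS hSc
  linarith [Finset.sum_add_sum_compl S fun i => |y i - x i|,
    Finset.sum_add_sum_compl S fun i => |x i|, Finset.sum_add_sum_compl S fun i => |y i|]

theorem l1_error_bound_general {m n : ℕ} (N H : Matrix (Fin m) (Fin n) ℝ)
    (s : ℕ) (hs : 0 < s) (κ : ℝ) (hκ : κ < 1 / 2)
    (hQ : ∀ w : Fin n → ℝ,
      (⨆ i, |w i|) ≤ (⨆ i, |(Hᵀ * N).mulVec w i|) + (κ / s) * ∑ i, |w i|)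
    (ν νhat : Fin n → ℝ) (h1 : (∑ i, |νhat i|) ≤ ∑ i, |ν i|) :
    (∑ i, |νhat i - ν i|) ≤
      (2 * s * (⨆ k, |(Hᵀ * N).mulVec (νhat - ν) k|) +
        2 * ((∑ i, |ν i|) - knorm s ν)) / (1 - 2 * κ) := by
  set ρ := ⨆ k, |(Hᵀ * N).mulVec (νhat - ν) k|
  obtain ⟨S, hScard, hknorm⟩ := exists_card_eq_min_knorm_eq s ν
  have htail : ∑ i ∈ Sᶜ, |ν i| = (∑ i, |ν i|) - knorm s ν := by
    rw [hknorm, ← Finset.sum_add_sum_compl S]; ring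
  have hcone := sum_abs_sub_le_of_sum_abs_le S h1
  have hs' : (0 : ℝ) < s := Nat.cast_pos.mpr hs
  have hQz : s * (⨆ i, |νhat i - ν i|) ≤ s * ρ + κ * ∑ i, |νhat i - ν i| := by
    have := mul_le_mul_of_nonneg_left (hQ (νhat - ν)) hs'.le
    rwa [mul_add, ← mul_assoc, mul_div_cancel₀ κ hs'.ne'] at this
  have hhead : ∑ i ∈ S, |νhat i - ν i| ≤ s * ⨆ i, |νhat i - ν i| := by
    refine (sum_abs_le_card_mul_iSup S _).trans (mul_le_mul_of_nonneg_right ?_ ?_)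
    · exact_mod_cast hScard ▸ min_le_left s n
    · exact Real.iSup_nonneg fun i => abs_nonneg _
  rw [le_div_iff₀ (by linarith)]
  linarith

/-- If `H` satisfies Condition `Q_∞(s,κ)` with `κ < 1/2`, `‖ν̂‖₁ ≤ ‖ν‖₁`,
`z = ν̂ − ν`, `ρ = ‖HᵀNz‖_∞`, then `‖z‖₁ ≤ (2sρ + 2‖ν − νˢ‖₁)/(1 − 2κ)`. -/
theorem l1_error_bound {m n : ℕ} (N H : Matrix (Fin m) (Fin n) ℝ)
    (s : ℕ) (hs : 0 < s) (hsn : s ≤ n) (κ : ℝ) (hκ0 : 0 < κ) (hκ : κ < 1 / 2)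
    (hQ : ∀ w : Fin n → ℝ,
      (⨆ i, |w i|) ≤ (⨆ i, |(Hᵀ * N).mulVec w i|) + (κ / s) * ∑ i, |w i|)
    (ν νhat : Fin n → ℝ) (h1 : (∑ i, |νhat i|) ≤ ∑ i, |ν i|) :
    (∑ i, |νhat i - ν i|) ≤
      (2 * s * (⨆ k, |(Hᵀ * N).mulVec (νhat - ν) k|) +
        2 * ((∑ i, |ν i|) - knorm s ν)) / (1 - 2 * κ) :=
  l1_error_bound_general N H s hs κ hκ hQ ν νhat h1
end

section
/- (Risk bound for the polyhedral estimate with bounded nuisance, deterministic core) Let X = {x : ∃t ∈ 𝒯, x^T T_k x ≤ t_k ∀k} and B_* = {y : ∃s ∈ 𝒮, y^T S_ℓ y ≤ s_ℓ ∀ℓ} be basic ellitopes, ‖·‖ the norm with dual unit ball B_*, and G = [g₁,…,g_I]. Suppose Δ ∈ 2X and |g_i^T A Δ| ≤ 2ψ for all i ≤ I. If (λ, μ, γ) ≥ 0 satisfy the semidefinite constraint [[Σ_ℓ λ_ℓ S_ℓ, ½B],[½B^T, Σ_k μ_k T_k + A^T(Σ_i γ_i g_i g_i^T)A]] ⪰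 0, then ‖BΔ‖ ≤ φ_𝒮(λ) + 4φ_𝒯(μ) + 4ψ²Σ_i γ_i, where φ_Z(ζ) = max_{z∈Z} ζ^T z is the support function. -/
/-!
Evaluating the quadratic form of the positive semidefinite block matrix at `(v, -Δ)` gives
`vᵀBΔ ≤ Σ_ℓ λ_ℓ vᵀS_ℓv + Σ_k μ_k ΔᵀT_kΔ + Σ_i γ_i (g_iᵀAΔ)²`. For `v ∈ B_*` with certificate
`s ∈ 𝒮` the first sum is at most `λᵀs ≤ φ_𝒮(λ)`; since `Δ ∈ 2X` with certificate `t ∈ 𝒯` the second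
is at most `4μᵀt ≤ 4φ_𝒯(μ)`; and `|g_iᵀAΔ| ≤ 2ψ` bounds the third by `4ψ²Σ_i γ_i`. Taking the
supremum over `v` bounds `‖BΔ‖`.
-/

open Matrix

section

variable {m n ι : Type*} [Fintype m] [Fintype n] [Fintype ι]

lemma dotProduct_sum_smul_mulVec (c : ι → ℝ) (M : ι → Matrix n n ℝ) (v : n → ℝ) :
    v ⬝ᵥ (∑ i, c i • M i) *ᵥ v = c ⬝ᵥ fun i => v ⬝ᵥ M i *ᵥ v := by
  rw [sum_mulVec, dotProduct_sum]
  simp only [smul_mulVec, dotProduct_smul, smul_eq_mul]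
  rfl

lemma dotProduct_vecMulVec_self_mulVec (g y : n → ℝ) :
    y ⬝ᵥ vecMulVec g g *ᵥ y = (g ⬝ᵥ y) ^ 2 := by
  rw [vecMulVec_mulVec, op_smul_eq_smul, dotProduct_smul, smul_eq_mul, dotProduct_comm y g]
  ring

lemma dotProduct_transpose_mul_sum_vecMulVec_mul_mulVec (A : Matrix m n ℝ) (c : ι → ℝ)
    (g : ι → m → ℝ) (x : n → ℝ) :
    x ⬝ᵥ (Aᵀ * (∑ i, c i • vecMulVec (g i) (g i)) * A) *ᵥ x =
      c ⬝ᵥ fun i => (g i ⬝ᵥ A *ᵥ x) ^ 2 := by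
  rw [← mulVec_mulVec, ← mulVec_mulVec, dotProduct_mulVec, vecMul_transpose,
    dotProduct_sum_smul_mulVec]
  simp only [dotProduct_vecMulVec_self_mulVec]

/-- The off-diagonal blocks `½B`, `½Bᵀ` make the quadratic form at `(v, -w)` equal to
`vᵀPv + wᵀQw - vᵀBw`. -/
lemma dotProduct_mulVec_le_of_posSemidef_fromBlocks {P : Matrix m m ℝ} {Q : Matrix n n ℝ}
    {B : Matrix m n ℝ} (h : (fromBlocks P ((1 / 2 : ℝ) • B) ((1 / 2 : ℝ) • Bᵀ) Q).PosSemidef)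
    (v : m → ℝ) (w : n → ℝ) :
    v ⬝ᵥ B *ᵥ w ≤ v ⬝ᵥ P *ᵥ v + w ⬝ᵥ Q *ᵥ w := by
  have hnonneg := h.dotProduct_mulVec_nonneg (Sum.elim v (-w))
  have hBt : w ⬝ᵥ Bᵀ *ᵥ v = v ⬝ᵥ B *ᵥ w := by
    rw [dotProduct_mulVec, vecMul_transpose, dotProduct_comm]
  simp only [star_trivial, fromBlocks_mulVec, sumElim_dotProduct_sumElim, Sum.elim_comp_inl,
    Sum.elim_comp_inr, dotProduct_add, mulVec_neg, smul_mulVec, dotProduct_neg,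
    neg_dotProduct, dotProduct_smul, smul_eq_mul, neg_neg, hBt] at hnonneg
  linarith

lemma dotProduct_le_sSup_image_of_isCompact {Z : Set (n → ℝ)}
    (hZ : IsCompact Z) (c : n → ℝ) {z : n → ℝ} (hz : z ∈ Z) :
    c ⬝ᵥ z ≤ sSup ((fun z => c ⬝ᵥ z) '' Z) :=
  le_csSup (hZ.bddAbove_image (by fun_prop)) ⟨z, hz, rfl⟩

lemma sSup_image_dotProduct_nonneg {c : n → ℝ} {Z : Set (n → ℝ)}
    (hc : 0 ≤ c) (hZ : ∀ z ∈ Z, 0 ≤ z) : 0 ≤ sSup ((fun z => c ⬝ᵥ z) '' Z) :=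
  Real.sSup_nonneg <| by
    rintro _ ⟨z, hz, rfl⟩
    exact dotProduct_nonneg_of_nonneg hc (hZ z hz)

end

theorem polyhedral_risk_bound_core_general {m p q L K I : ℕ}
    (A : Matrix (Fin m) (Fin p) ℝ) (B : Matrix (Fin q) (Fin p) ℝ)
    (S : Fin L → Matrix (Fin q) (Fin q) ℝ)
    (T : Fin K → Matrix (Fin p) (Fin p) ℝ)
    (𝒯 : Set (Fin K → ℝ)) (h𝒯pos : ∀ t ∈ 𝒯, ∀ k, 0 ≤ t k) (h𝒯comp : IsCompact 𝒯)
    (𝒮 : Set (Fin L → ℝ)) (h𝒮pos : ∀ s ∈ 𝒮, ∀ ℓ, 0 ≤ s ℓ) (h𝒮comp : IsCompact 𝒮)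
    (g : Fin I → Fin m → ℝ) (ψ : ℝ)
    (Δ : Fin p → ℝ)
    (hΔ : ∃ t ∈ 𝒯, ∀ k, Δ ⬝ᵥ (T k).mulVec Δ ≤ 4 * t k)
    (hg : ∀ i, |g i ⬝ᵥ A.mulVec Δ| ≤ 2 * ψ)
    (lam : Fin L → ℝ) (hlam : ∀ ℓ, 0 ≤ lam ℓ)
    (mu : Fin K → ℝ) (hmu : ∀ k, 0 ≤ mu k)
    (γ : Fin I → ℝ) (hγ : ∀ i, 0 ≤ γ i)
    (hLMI : (Matrix.fromBlocks (∑ ℓ, lam ℓ • S ℓ) ((1 / 2 : ℝ) • B)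
        ((1 / 2 : ℝ) • Bᵀ)
        ((∑ k, mu k • T k) +
          Aᵀ * (∑ i, γ i • Matrix.vecMulVec (g i) (g i)) * A)).PosSemidef) :
    sSup {r : ℝ | ∃ v : Fin q → ℝ,
        (∃ s ∈ 𝒮, ∀ ℓ, v ⬝ᵥ (S ℓ).mulVec v ≤ s ℓ) ∧ r = v ⬝ᵥ B.mulVec Δ} ≤
      sSup ((fun s => lam ⬝ᵥ s) '' 𝒮) + 4 * sSup ((fun t => mu ⬝ᵥ t) '' 𝒯) +
        4 * ψ ^ 2 * ∑ i, γ i := by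
  obtain ⟨t, ht, hΔt⟩ := hΔ
  have hT : mu ⬝ᵥ (fun k => Δ ⬝ᵥ T k *ᵥ Δ) ≤ 4 * sSup ((fun t => mu ⬝ᵥ t) '' 𝒯) :=
    calc _ ≤ mu ⬝ᵥ ((4 : ℝ) • t) := dotProduct_le_dotProduct_of_nonneg_left hΔt hmu
      _ = 4 * (mu ⬝ᵥ t) := by rw [dotProduct_smul, smul_eq_mul]
      _ ≤ _ := by grw [dotProduct_le_sSup_image_of_isCompact h𝒯comp mu ht]
  have hA : γ ⬝ᵥ (fun i => (g i ⬝ᵥ A *ᵥ Δ) ^ 2) ≤ 4 * ψ ^ 2 * ∑ i, γ i :=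
    calc _ ≤ γ ⬝ᵥ fun _ => (2 * ψ) ^ 2 :=
          dotProduct_le_dotProduct_of_nonneg_left (fun i => sq_le_sq' (abs_le.mp (hg i)).1
            (abs_le.mp (hg i)).2) hγ
      _ = 4 * ψ ^ 2 * ∑ i, γ i := by simp only [dotProduct, ← Finset.sum_mul]; ring
  refine Real.sSup_le ?_ ?_
  · rintro _ ⟨v, ⟨s, hs, hvs⟩, rfl⟩
    have hS : lam ⬝ᵥ (fun ℓ => v ⬝ᵥ S ℓ *ᵥ v) ≤ sSup ((fun s => lam ⬝ᵥ s) '' 𝒮) :=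
      (dotProduct_le_dotProduct_of_nonneg_left hvs hlam).trans
        (dotProduct_le_sSup_image_of_isCompact h𝒮comp lam hs)
    have hquad := dotProduct_mulVec_le_of_posSemidef_fromBlocks hLMI v Δ
    rw [add_mulVec, dotProduct_add, dotProduct_sum_smul_mulVec, dotProduct_sum_smul_mulVec,
      dotProduct_transpose_mul_sum_vecMulVec_mul_mulVec] at hquad
    linarith
  · have := sSup_image_dotProduct_nonneg hlam h𝒮pos
    have := sSup_image_dotProduct_nonneg hmu h𝒯pos
    have := Finset.sum_nonneg fun i (_ : i ∈ Finset.univ) => hγ i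
    positivity

/-- Risk bound for the polyhedral estimate (deterministic core): if `Δ ∈ 2X`,
`|g_iᵀAΔ| ≤ 2ψ` for all `i`, and `(λ,μ,γ) ≥ 0` satisfies the LMI
`[[Σ λ_ℓ S_ℓ, ½B],[½Bᵀ, Σ μ_k T_k + Aᵀ(Σ γ_i g_i g_iᵀ)A]] ⪰ 0`, then
`‖BΔ‖ ≤ φ_𝒮(λ) + 4φ_𝒯(μ) + 4ψ² Σ γ_i`, where `‖w‖ = max{vᵀw : v ∈ B_*}` and
`φ_Z` is the support function. -/
theorem polyhedral_risk_bound_core {m p q L K I : ℕ}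
    (A : Matrix (Fin m) (Fin p) ℝ) (B : Matrix (Fin q) (Fin p) ℝ)
    (S : Fin L → Matrix (Fin q) (Fin q) ℝ) (hS : ∀ ℓ, (S ℓ).PosSemidef)
    (T : Fin K → Matrix (Fin p) (Fin p) ℝ) (hT : ∀ k, (T k).PosSemidef)
    (𝒯 : Set (Fin K → ℝ)) (h𝒯pos : ∀ t ∈ 𝒯, ∀ k, 0 ≤ t k) (h𝒯comp : IsCompact 𝒯)
    (𝒮 : Set (Fin L → ℝ)) (h𝒮pos : ∀ s ∈ 𝒮, ∀ ℓ, 0 ≤ s ℓ) (h𝒮comp : IsCompact 𝒮)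
    (g : Fin I → Fin m → ℝ) (ψ : ℝ) (hψ : 0 ≤ ψ)
    (Δ : Fin p → ℝ)
    (hΔ : ∃ t ∈ 𝒯, ∀ k, Δ ⬝ᵥ (T k).mulVec Δ ≤ 4 * t k)
    (hg : ∀ i, |g i ⬝ᵥ A.mulVec Δ| ≤ 2 * ψ)
    (lam : Fin L → ℝ) (hlam : ∀ ℓ, 0 ≤ lam ℓ)
    (mu : Fin K → ℝ) (hmu : ∀ k, 0 ≤ mu k)
    (γ : Fin I → ℝ) (hγ : ∀ i, 0 ≤ γ i)
    (hLMI : (Matrix.fromBlocks (∑ ℓ, lam ℓ • S ℓ) ((1 / 2 : ℝ) • B)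
        ((1 / 2 : ℝ) • Bᵀ)
        ((∑ k, mu k • T k) +
          Aᵀ * (∑ i, γ i • Matrix.vecMulVec (g i) (g i)) * A)).PosSemidef) :
    sSup {r : ℝ | ∃ v : Fin q → ℝ,
        (∃ s ∈ 𝒮, ∀ ℓ, v ⬝ᵥ (S ℓ).mulVec v ≤ s ℓ) ∧ r = v ⬝ᵥ B.mulVec Δ} ≤
      sSup ((fun s => lam ⬝ᵥ s) '' 𝒮) + 4 * sSup ((fun t => mu ⬝ᵥ t) '' 𝒯) +
        4 * ψ ^ 2 * ∑ i, γ i :=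
  polyhedral_risk_bound_core_general A B S T 𝒯 h𝒯pos h𝒯comp 𝒮 h𝒮pos h𝒮comp g ψ Δ hΔ hg lam hlam mu
    hmu γ hγ hLMI
end
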